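/- The central extension 1 → ℤ → π₁(Kb) → D_∞ → 1, where ℤ is the center of the Klein bottle group, does not split: there is no subgroup of π₁(Kb) mapping isomorphically onto D_∞. -/

import Mathlib

/-- Relations for the Klein bottle group ⟨d, y ∣ d y d⁻¹ = y⁻¹⟩. -/
def kleinRels : Set (FreeGroup Bool) :=
  {FreeGroup.of true * FreeGroup.of false * (FreeGroup.of true)⁻¹ * FreeGroup.of false}

abbrev KleinGroup : Type := PresentedGroup kleinRels

/-!
A splitting would lift the involution `d̄ ∈ D_∞` to an element `d z` of order two with `z`
central. Map π₁(Kb) onto `Q₈` by `d ↦ j`, `y ↦ i`: the image of `z` is central, i.e. `±1`,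
so `(d z)²` maps to `j² = -1 ≠ 1`.
-/

open Subgroup QuaternionGroup

theorem Subgroup.map_mem_center_of_surjective {G Q : Type*} [Group G] [Group Q] {f : G →* Q}
    (hf : Function.Surjective f) {z : G} (hz : z ∈ center G) : f z ∈ center Q := by
  rw [mem_center_iff]
  intro q
  obtain ⟨g, rfl⟩ := hf q
  rw [← map_mul, ← map_mul, mem_center_iff.mp hz g]

theorem Subgroup.exists_mem_mul_sq_eq_one_of_bijective {G : Type*} [Group G] {N : Subgroup G}
    [N.Normal] {H : Subgroup G} (hH : Function.Bijective (fun h : H => QuotientGroup.mk' N h))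
    {g : G} (hg : g ^ 2 ∈ N) : ∃ z ∈ N, (g * z) ^ 2 = 1 := by
  obtain ⟨h, hh : QuotientGroup.mk' N h = QuotientGroup.mk' N g⟩ := hH.2 (QuotientGroup.mk' N g)
  have hz : g⁻¹ * h ∈ N := by
    rwa [← QuotientGroup.eq, eq_comm]
  refine ⟨g⁻¹ * h, hz, ?_⟩
  have hsq : h ^ 2 = 1 := by
    apply hH.1
    change QuotientGroup.mk' N ((h : G) ^ 2) = QuotientGroup.mk' N 1
    rw [map_pow, hh, ← map_pow, map_one]
    exact (QuotientGroup.eq_one_iff _).mpr hg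
  simpa using congrArg Subtype.val hsq

theorem QuaternionGroup.xa_zero_mul_sq_ne_one_of_mem_center {c : QuaternionGroup 2}
    (hc : c ∈ center (QuaternionGroup 2)) : (xa 0 * c) ^ 2 ≠ 1 := by
  revert c
  simp only [mem_center_iff]
  decide

namespace KleinGroup

def d : KleinGroup := PresentedGroup.of true

def y : KleinGroup := PresentedGroup.of false

theorem d_mul_y_mul_d_inv : d * y * d⁻¹ = y⁻¹ :=
  mul_eq_one_iff_eq_inv.mp (PresentedGroup.one_of_mem rfl)

theorem semiconjBy_d_y : SemiconjBy d y y⁻¹ := by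
  rw [SemiconjBy, ← d_mul_y_mul_d_inv]
  group

theorem d_sq_mem_center : d ^ 2 ∈ center KleinGroup := by
  have hy : Commute (d ^ 2) y := by
    have h := semiconjBy_d_y.inv_right
    rw [inv_inv] at h
    exact sq d ▸ h.mul_left semiconjBy_d_y
  have hcentralizer (g : KleinGroup) : g ∈ centralizer {d ^ 2} := by
    refine PresentedGroup.generated_by _ _ (fun b => ?_) g
    rw [mem_centralizer_singleton_iff]
    cases b
    · exact hy.symm
    · exact (Commute.self_pow d 2).symm
  exact mem_center_iff.mpr fun g => mem_centralizer_singleton_iff.mp (hcentralizer g)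

theorem toQ8_rels : ∀ r ∈ kleinRels,
    FreeGroup.lift (fun b : Bool => if b then xa 0 else (a 1 : QuaternionGroup 2)) r = 1 := by
  rintro r rfl
  decide

def toQ8 : KleinGroup →* QuaternionGroup 2 :=
  PresentedGroup.toGroup toQ8_rels

theorem toQ8_d : toQ8 d = xa 0 := PresentedGroup.toGroup.of toQ8_rels

theorem toQ8_y : toQ8 y = a 1 := PresentedGroup.toGroup.of toQ8_rels

theorem toQ8_surjective : Function.Surjective toQ8 := by
  rintro (i | i)
  · exact ⟨y ^ i.val, by rw [map_pow, toQ8_y, a_one_pow, ZMod.natCast_zmod_val]⟩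
  · exact ⟨d * y ^ i.val, by
      rw [map_mul, map_pow, toQ8_d, toQ8_y, a_one_pow, ZMod.natCast_zmod_val, xa_mul_a, zero_add]⟩

end KleinGroup

/-- The central extension 1 → ℤ → π₁(Kb) → D_∞ → 1, where ℤ = ζπ₁(Kb) is the
centre, does not split: no subgroup of π₁(Kb) is carried isomorphically onto
the quotient π₁(Kb)/ζπ₁(Kb) ≅ D_∞ by the quotient map. -/
theorem klein_central_extension_not_split :
    ¬ ∃ H : Subgroup KleinGroup,
      Function.Bijective
        (fun h : H => QuotientGroup.mk' (Subgroup.center KleinGroup) (h : KleinGroup)) := by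
  rintro ⟨H, hH⟩
  obtain ⟨z, hz, hsq⟩ := exists_mem_mul_sq_eq_one_of_bijective hH KleinGroup.d_sq_mem_center
  apply xa_zero_mul_sq_ne_one_of_mem_center
    (map_mem_center_of_surjective KleinGroup.toQ8_surjective hz)
  rw [← KleinGroup.toQ8_d, ← map_mul, ← map_pow, hsq, map_one]
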